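/- arXiv:1201.2323 — 2 statements merged into one kernel-verified Lean document; each statement's English description precedes it below -/
import Mathlib

section
/- Let p, q ∈ [0, 1/2]. Then the double inequality G(p·a+(1-p)·b, p·b+(1-p)·a) < I(a,b) < G(q·a+(1-q)·b, q·b+(1-q)·a) holds for every pair of distinct positive real numbers a and b if and only if p ≤ (1 - √(1 - 4/e²))/2 and q ≥ (3 - √3)/6. -/
/-
Put A = (a + b)/2, x = (a - b)/(a + b) and u = (1 - 2t)², so that a = A(1 + x), b = A(1 - x) and
log G(ta + (1-t)b, tb + (1-t)a) - log I(a, b) = f u 1 x. Both inequalities thus become sign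
conditions on the even function f u 1 on (0, 1).

There f u 1 tends to 0 at 0 and to 1 - log 2 + log (1 - u) / 2 at 1, x² (f u 1)' = h u 1,
h u 1 0 = 0, and (h u 1)' has the sign of g u x = 1 - 3u + u(1 + u)x², which increases with x.
If u ≤ 1/3 then g > 0, so h > 0 and f > 0; if u > 1/3 then g < 0 near 0, so f < 0 near 0. In any
case h changes sign at most once, from negative to positive, so f first decreases and then
increases: f < 0 on (0, 1) exactly when its limit at 1 is ≤ 0, i.e. when u ≥ 1 - 4/e². Finally
p ≤ (1 - √(1 - 4/e²))/2 iff (1 - 2p)² ≥ 1 - 4/e², and q ≥ (3 - √3)/6 iff (1 - 2q)² ≤ 1/3.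
-/

noncomputable def A (a b : ℝ) : ℝ := (a + b) / 2

noncomputable def G (a b : ℝ) : ℝ := Real.sqrt (a * b)

noncomputable def H (a b : ℝ) : ℝ := 2 * a * b / (a + b)

noncomputable def I (a b : ℝ) : ℝ :=
  (1 / Real.exp 1) * (a ^ a / b ^ b) ^ (1 / (a - b))

noncomputable def Q (t s a b : ℝ) : ℝ :=
  G (t * a + (1 - t) * b) (t * b + (1 - t) * a) ^ s * A a b ^ (1 - s)

noncomputable def f (u s x : ℝ) : ℝ :=
  1 - (1 / (2 * x)) * Real.log ((1 + x) / (1 - x))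
    - (1 / 2) * Real.log (1 - x ^ 2) + (s / 2) * Real.log (1 - u * x ^ 2)

noncomputable def h (u s x : ℝ) : ℝ :=
  -x + (1 / 2) * Real.log ((1 + x) / (1 - x)) - s * u * x ^ 3 / (1 - u * x ^ 2)

open Real Set Filter Topology

section MonotoneLimits

variable {φ φ' : ℝ → ℝ}

lemma strictMonoOn_of_hasDerivAt_pos {s : Set ℝ} (hs : Convex ℝ s)
    (hφ : ∀ x ∈ s, HasDerivAt φ (φ' x) x) (hpos : ∀ x ∈ interior s, 0 < φ' x) :
    StrictMonoOn φ s :=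
  strictMonoOn_of_hasDerivWithinAt_pos hs (fun x hx => (hφ x hx).continuousAt.continuousWithinAt)
    (fun x hx => (hφ x (interior_subset hx)).hasDerivWithinAt) hpos

lemma strictAntiOn_of_hasDerivAt_neg {s : Set ℝ} (hs : Convex ℝ s)
    (hφ : ∀ x ∈ s, HasDerivAt φ (φ' x) x) (hneg : ∀ x ∈ interior s, φ' x < 0) :
    StrictAntiOn φ s :=
  strictAntiOn_of_hasDerivWithinAt_neg hs (fun x hx => (hφ x hx).continuousAt.continuousWithinAt)
    (fun x hx => (hφ x (interior_subset hx)).hasDerivWithinAt) hneg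

lemma StrictMonoOn.lt_of_tendsto_nhdsGT {a x l : ℝ} (hmono : StrictMonoOn φ (Ioc a x))
    (hax : a < x) (hlim : Tendsto φ (𝓝[>] a) (𝓝 l)) : l < φ x := by
  have hy : (a + x) / 2 ∈ Ioc a x := ⟨by linarith, by linarith⟩
  have hle : l ≤ φ ((a + x) / 2) := by
    refine le_of_tendsto hlim ?_
    filter_upwards [Ioo_mem_nhdsGT hy.1] with z hz
    exact (hmono ⟨hz.1, hz.2.le.trans hy.2⟩ hy hz.2).le
  exact hle.trans_lt (hmono hy ⟨hax, le_rfl⟩ (by linarith))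

lemma StrictAntiOn.lt_of_tendsto_nhdsGT {a x l : ℝ} (hanti : StrictAntiOn φ (Ioc a x))
    (hax : a < x) (hlim : Tendsto φ (𝓝[>] a) (𝓝 l)) : φ x < l :=
  neg_lt_neg_iff.mp (hanti.neg.lt_of_tendsto_nhdsGT hax hlim.neg)

lemma StrictMonoOn.lt_of_tendsto_nhdsLT {x b l : ℝ} (hmono : StrictMonoOn φ (Ico x b))
    (hxb : x < b) (hlim : Tendsto φ (𝓝[<] b) (𝓝 l)) : φ x < l := by
  have hy : (x + b) / 2 ∈ Ico x b := ⟨by linarith, by linarith⟩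
  have hle : φ ((x + b) / 2) ≤ l := by
    refine ge_of_tendsto hlim ?_
    filter_upwards [Ioo_mem_nhdsLT hy.2] with z hz
    exact (hmono hy ⟨hy.1.trans hz.1.le, hz.2⟩ hz.1).le
  exact (hmono ⟨le_rfl, hxb⟩ hy (by linarith)).trans_le hle

end MonotoneLimits

lemma one_sub_mul_sq_pos {u x : ℝ} (hu : u ≤ 1) (hx : x ∈ Ioo (-1) 1) : 0 < 1 - u * x ^ 2 := by
  nlinarith [hx.1, hx.2, sq_nonneg x]

lemma hasDerivAt_log_one_add_div_one_sub {x : ℝ} (hx : x ∈ Ioo (-1) 1) :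
    HasDerivAt (fun x => log ((1 + x) / (1 - x))) (2 / (1 - x ^ 2)) x := by
  have h1 : 0 < 1 + x := by linarith [hx.1]
  have h2 : 0 < 1 - x := by linarith [hx.2]
  have hq : HasDerivAt (fun x : ℝ => (1 + x) / (1 - x))
      ((1 * (1 - x) - (1 + x) * (-1)) / (1 - x) ^ 2) x :=
    ((hasDerivAt_id x).const_add 1).div ((hasDerivAt_id x).const_sub 1) h2.ne'
  have h3 : (1 : ℝ) - x ^ 2 ≠ 0 := by nlinarith
  convert hq.log (div_pos h1 h2).ne' using 1
  field_simp
  ring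

def g (u x : ℝ) : ℝ := 1 - 3 * u + u * (1 + u) * x ^ 2

lemma hasDerivAt_h {u x : ℝ} (hu : u ≤ 1) (hx : x ∈ Ioo (-1) 1) :
    HasDerivAt (h u 1) (x ^ 2 * g u x / ((1 - x ^ 2) * (1 - u * x ^ 2) ^ 2)) x := by
  have hx2 : 0 < 1 - x ^ 2 := by simpa using one_sub_mul_sq_pos le_rfl hx
  have hux := one_sub_mul_sq_pos hu hx
  have hnum : HasDerivAt (fun x : ℝ => 1 * u * x ^ 3) (1 * u * (3 * x ^ 2)) x := by
    simpa using (hasDerivAt_pow 3 x).const_mul (1 * u)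
  have hden : HasDerivAt (fun x : ℝ => 1 - u * x ^ 2) (-(u * (2 * x))) x := by
    simpa using ((hasDerivAt_pow 2 x).const_mul u).const_sub 1
  have key := ((hasDerivAt_id x).neg.add
    ((hasDerivAt_log_one_add_div_one_sub hx).const_mul (1 / 2))).sub (hnum.div hden hux.ne')
  unfold h
  refine key.congr_deriv ?_
  rw [g, show -1 + 1 / 2 * (2 / (1 - x ^ 2)) = x ^ 2 / (1 - x ^ 2) by field_simp; ring,
    div_sub_div _ _ hx2.ne' (by positivity), div_eq_div_iff (by positivity) (by positivity)]
  ring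

lemma hasDerivAt_f {u x : ℝ} (hu : u ≤ 1) (hx : x ∈ Ioo 0 1) :
    HasDerivAt (f u 1) (h u 1 x / x ^ 2) x := by
  have hx' : x ∈ Ioo (-1) 1 := ⟨by linarith [hx.1], hx.2⟩
  have hx2 : 0 < 1 - x ^ 2 := by simpa using one_sub_mul_sq_pos le_rfl hx'
  have hux := one_sub_mul_sq_pos hu hx'
  have hinv : HasDerivAt (fun x : ℝ => 1 / (2 * x)) ((0 * (2 * x) - 1 * 2) / (2 * x) ^ 2) x :=
    (hasDerivAt_const x (1 : ℝ)).div (by simpa using (hasDerivAt_id x).const_mul (2 : ℝ))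
      (mul_ne_zero two_ne_zero hx.1.ne')
  have hsq : HasDerivAt (fun x : ℝ => 1 - x ^ 2) (-(2 * x)) x := by
    simpa using (hasDerivAt_pow 2 x).const_sub 1
  have husq : HasDerivAt (fun x : ℝ => 1 - u * x ^ 2) (-(u * (2 * x))) x := by
    simpa using ((hasDerivAt_pow 2 x).const_mul u).const_sub 1
  have key := (((hinv.mul (hasDerivAt_log_one_add_div_one_sub hx')).const_sub 1).sub
    ((hsq.log hx2.ne').const_mul (1 / 2))).add ((husq.log hux.ne').const_mul (1 / 2))
  unfold f
  refine key.congr_deriv ?_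
  simp only [h]
  field_simp
  ring

lemma tendsto_f_nhdsGT_zero (u : ℝ) : Tendsto (f u 1) (𝓝[>] 0) (𝓝 0) := by
  have hL : HasDerivAt (fun x => log ((1 + x) / (1 - x))) 2 0 := by
    simpa using hasDerivAt_log_one_add_div_one_sub (x := 0) ⟨by norm_num, by norm_num⟩
  have hslope : Tendsto (fun x : ℝ => 1 / (2 * x) * log ((1 + x) / (1 - x))) (𝓝[>] 0) (𝓝 1) := by
    have h := ((hasDerivAt_iff_tendsto_slope_zero.mp hL).mono_left
      (nhdsWithin_mono _ fun x hx => ne_of_gt hx)).const_mul (1 / 2)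
    rw [show (1 : ℝ) / 2 * 2 = 1 by norm_num] at h
    refine h.congr fun x => ?_
    rw [smul_eq_mul, zero_add, add_zero, sub_zero, div_one, Real.log_one, sub_zero]
    ring
  have hrest : Tendsto (fun x : ℝ => -(1 / 2) * log (1 - x ^ 2) + 1 / 2 * log (1 - u * x ^ 2))
      (𝓝[>] 0) (𝓝 0) := by
    have : ContinuousAt (fun x : ℝ => -(1 / 2) * log (1 - x ^ 2) + 1 / 2 * log (1 - u * x ^ 2))
        0 := by
      fun_prop (disch := norm_num)
    simpa using this.tendsto.mono_left nhdsWithin_le_nhds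
  have h := (tendsto_const_nhds (x := (1 : ℝ))).sub hslope |>.add hrest
  rw [show (1 : ℝ) - 1 + 0 = 0 by norm_num] at h
  refine h.congr fun x => ?_
  simp only [f]
  ring

lemma tendsto_f_nhdsLT_one {u : ℝ} (hu : u < 1) :
    Tendsto (f u 1) (𝓝[<] 1) (𝓝 (1 - log 2 + 1 / 2 * log (1 - u))) := by
  set F : ℝ → ℝ := fun x => 1 - (1 / (2 * x) + 1 / 2) * log (1 + x)
    - 1 / (2 * x) * negMulLog (1 - x) + 1 / 2 * log (1 - u * x ^ 2)
  have hF : ContinuousAt F 1 := by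
    have := continuous_negMulLog
    have hu' : 1 - u ≠ 0 := by linarith
    fun_prop (disch := norm_num [hu'])
  have hF1 : F 1 = 1 - log 2 + 1 / 2 * log (1 - u) := by
    norm_num [F]
  rw [← hF1]
  refine (hF.tendsto.mono_left nhdsWithin_le_nhds).congr' ?_
  filter_upwards [Ioo_mem_nhdsLT one_pos] with x hx
  have h1 : 0 < 1 + x := by linarith [hx.1]
  have h2 : 0 < 1 - x := by linarith [hx.2]
  have := hx.1.ne'
  simp only [F, f, negMulLog, log_div h1.ne' h2.ne',
    show 1 - x ^ 2 = (1 + x) * (1 - x) by ring, log_mul h1.ne' h2.ne']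
  field_simp
  ring

lemma g_pos_of_lt {u y z : ℝ} (hu : 0 ≤ u) (hy : 0 ≤ y) (hyz : y < z) (hg : 0 ≤ g u y) :
    0 < g u z := by
  unfold g at *
  rcases hu.eq_or_lt with rfl | hu
  · norm_num
  · have hz : 0 < z ^ 2 - y ^ 2 := by nlinarith
    nlinarith [mul_pos (mul_pos hu (by linarith : (0 : ℝ) < 1 + u)) hz]

lemma h_zero (u : ℝ) : h u 1 0 = 0 := by simp [h]

lemma strictMonoOn_h {u : ℝ} (hu : u ≤ 1) {s : Set ℝ} (hs : Convex ℝ s) (hsub : s ⊆ Ico 0 1)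
    (hg : ∀ x ∈ interior s, 0 < g u x) : StrictMonoOn (h u 1) s := by
  refine strictMonoOn_of_hasDerivAt_pos hs
    (fun x hx => hasDerivAt_h hu ⟨by linarith [(hsub hx).1], (hsub hx).2⟩) fun x hx => ?_
  have hx' : x ∈ Ioo 0 1 := by simpa using interior_mono hsub hx
  have := one_sub_mul_sq_pos hu ⟨by linarith [hx'.1], hx'.2⟩
  have : 0 < 1 - x ^ 2 := by nlinarith [hx'.1, hx'.2]
  exact div_pos (mul_pos (pow_pos hx'.1 2) (hg x hx)) (by positivity)

lemma strictAntiOn_h {u : ℝ} (hu : u ≤ 1) {s : Set ℝ} (hs : Convex ℝ s) (hsub : s ⊆ Ico 0 1)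
    (hg : ∀ x ∈ interior s, g u x < 0) : StrictAntiOn (h u 1) s := by
  refine strictAntiOn_of_hasDerivAt_neg hs
    (fun x hx => hasDerivAt_h hu ⟨by linarith [(hsub hx).1], (hsub hx).2⟩) fun x hx => ?_
  have hx' : x ∈ Ioo 0 1 := by simpa using interior_mono hsub hx
  have := one_sub_mul_sq_pos hu ⟨by linarith [hx'.1], hx'.2⟩
  have : 0 < 1 - x ^ 2 := by nlinarith [hx'.1, hx'.2]
  exact div_neg_of_neg_of_pos (mul_neg_of_pos_of_neg (pow_pos hx'.1 2) (hg x hx)) (by positivity)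

lemma h_neg_of_g_nonpos {u y : ℝ} (hu0 : 0 ≤ u) (hu1 : u ≤ 1) (hy : y ∈ Ioo 0 1)
    (hg : g u y ≤ 0) : h u 1 y < 0 := by
  have hanti : StrictAntiOn (h u 1) (Icc 0 y) :=
    strictAntiOn_h hu1 (convex_Icc 0 y) (Icc_subset_Ico_right hy.2) fun z hz => by
      rw [interior_Icc] at hz
      by_contra! hgz
      exact (g_pos_of_lt hu0 hz.1.le hz.2 hgz).not_ge hg
  simpa [h_zero] using hanti (left_mem_Icc.2 hy.1.le) (right_mem_Icc.2 hy.1.le) hy.1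

lemma strictMonoOn_h_Ico {u y : ℝ} (hu0 : 0 ≤ u) (hu1 : u ≤ 1) (hy : 0 ≤ y) (hg : 0 ≤ g u y) :
    StrictMonoOn (h u 1) (Ico y 1) :=
  strictMonoOn_h hu1 (convex_Ico y 1) (Ico_subset_Ico_left hy) fun z hz => by
    rw [interior_Ico] at hz
    exact g_pos_of_lt hu0 hy hz.1 hg

lemma h_pos {u x : ℝ} (hu0 : 0 ≤ u) (hu : u ≤ 1 / 3) (hx : x ∈ Ioo 0 1) : 0 < h u 1 x := by
  have hg : 0 ≤ g u 0 := by simp only [g]; linarith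
  simpa [h_zero] using strictMonoOn_h_Ico hu0 (by linarith) le_rfl hg (left_mem_Ico.2 one_pos)
    (Ioo_subset_Ico_self hx) hx.1

lemma h_neg_of_lt {u x y : ℝ} (hu0 : 0 ≤ u) (hu1 : u ≤ 1) (hx : x ∈ Ioo 0 1)
    (hhx : h u 1 x ≤ 0) (hy : y ∈ Ioo 0 x) : h u 1 y < 0 := by
  rcases le_or_gt (g u y) 0 with hg | hg
  · exact h_neg_of_g_nonpos hu0 hu1 ⟨hy.1, hy.2.trans hx.2⟩ hg
  · exact (strictMonoOn_h_Ico hu0 hu1 hy.1.le hg.le ⟨le_rfl, hy.2.trans hx.2⟩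
      ⟨hy.2.le, hx.2⟩ hy.2).trans_le hhx

lemma h_pos_of_le {u x y : ℝ} (hu0 : 0 ≤ u) (hu1 : u ≤ 1) (hx : x ∈ Ioo 0 1)
    (hhx : 0 < h u 1 x) (hy : y ∈ Ico x 1) : 0 < h u 1 y := by
  have hg : 0 ≤ g u x := by
    by_contra! hg
    exact (h_neg_of_g_nonpos hu0 hu1 hx hg.le).not_gt hhx
  rcases hy.1.eq_or_lt with rfl | hxy
  · exact hhx
  · exact hhx.trans (strictMonoOn_h_Ico hu0 hu1 hx.1.le hg ⟨le_rfl, hx.2⟩ hy hxy)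

lemma strictMonoOn_f {u : ℝ} (hu : u ≤ 1) {s : Set ℝ} (hs : Convex ℝ s) (hsub : s ⊆ Ioo 0 1)
    (hh : ∀ x ∈ interior s, 0 < h u 1 x) : StrictMonoOn (f u 1) s :=
  strictMonoOn_of_hasDerivAt_pos hs (fun _ hx => hasDerivAt_f hu (hsub hx)) fun x hx =>
    div_pos (hh x hx) (pow_pos (hsub (interior_subset hx)).1 2)

lemma strictAntiOn_f {u : ℝ} (hu : u ≤ 1) {s : Set ℝ} (hs : Convex ℝ s) (hsub : s ⊆ Ioo 0 1)
    (hh : ∀ x ∈ interior s, h u 1 x < 0) : StrictAntiOn (f u 1) s :=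
  strictAntiOn_of_hasDerivAt_neg hs (fun _ hx => hasDerivAt_f hu (hsub hx)) fun x hx =>
    div_neg_of_neg_of_pos (hh x hx) (pow_pos (hsub (interior_subset hx)).1 2)

lemma f_pos {u x : ℝ} (hu0 : 0 ≤ u) (hu : u ≤ 1 / 3) (hx : x ∈ Ioo 0 1) : 0 < f u 1 x :=
  (strictMonoOn_f (by linarith) (convex_Ioc 0 x) (Ioc_subset_Ioo_right hx.2) fun y hy => by
    rw [interior_Ioc] at hy
    exact h_pos hu0 hu ⟨hy.1, hy.2.trans hx.2⟩).lt_of_tendsto_nhdsGT hx.1 (tendsto_f_nhdsGT_zero u)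

lemma f_neg_of_h_nonpos {u x : ℝ} (hu0 : 0 ≤ u) (hu1 : u ≤ 1) (hx : x ∈ Ioo 0 1)
    (hhx : h u 1 x ≤ 0) : f u 1 x < 0 :=
  (strictAntiOn_f hu1 (convex_Ioc 0 x) (Ioc_subset_Ioo_right hx.2) fun y hy => by
    rw [interior_Ioc] at hy
    exact h_neg_of_lt hu0 hu1 hx hhx hy).lt_of_tendsto_nhdsGT hx.1 (tendsto_f_nhdsGT_zero u)

lemma f_neg {u x : ℝ} (hu0 : 0 ≤ u) (hu1 : u < 1) (hlim : 1 - log 2 + 1 / 2 * log (1 - u) ≤ 0)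
    (hx : x ∈ Ioo 0 1) : f u 1 x < 0 := by
  rcases le_or_gt (h u 1 x) 0 with hhx | hhx
  · exact f_neg_of_h_nonpos hu0 hu1.le hx hhx
  · have hmono : StrictMonoOn (f u 1) (Ico x 1) :=
      strictMonoOn_f hu1.le (convex_Ico x 1) (Ico_subset_Ioo_left hx.1) fun y hy =>
        h_pos_of_le hu0 hu1.le hx hhx (interior_subset hy)
    exact (hmono.lt_of_tendsto_nhdsLT hx.2 (tendsto_f_nhdsLT_one hu1)).trans_le hlim

lemma exists_f_neg {u : ℝ} (hu : 1 / 3 < u) (hu1 : u ≤ 1) : ∃ x ∈ Ioo 0 1, f u 1 x < 0 := by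
  have hx : (3 * u - 1) / 4 ∈ Ioo (0 : ℝ) 1 := ⟨by linarith, by linarith⟩
  refine ⟨_, hx, f_neg_of_h_nonpos (by linarith) hu1 hx
    (h_neg_of_g_nonpos (by linarith) hu1 hx ?_).le⟩
  have hsq : ((3 * u - 1) / 4) ^ 2 ≤ (3 * u - 1) / 8 := by nlinarith [hx.1]
  have hcoef : u * (1 + u) ≤ 2 := by nlinarith
  simp only [g]
  nlinarith [mul_le_mul hcoef hsq (sq_nonneg _) zero_le_two]

lemma f_limit_nonpos_of_forall_f_neg {u : ℝ} (hu : u < 1) (hneg : ∀ x ∈ Ioo 0 1, f u 1 x < 0) :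
    1 - log 2 + 1 / 2 * log (1 - u) ≤ 0 := by
  refine le_of_tendsto (tendsto_f_nhdsLT_one hu) ?_
  filter_upwards [Ioo_mem_nhdsLT one_pos] with x hx
  exact (hneg x hx).le

lemma f_le_f_of_le {u u' x : ℝ} (hu' : u' ≤ u) (hu : u ≤ 1) (hx : x ∈ Ioo (-1) 1) :
    f u 1 x ≤ f u' 1 x := by
  have hlog := log_le_log (one_sub_mul_sq_pos hu hx) (by nlinarith [sq_nonneg x] :
    1 - u * x ^ 2 ≤ 1 - u' * x ^ 2)
  simp only [f]
  linarith

lemma f_even (u s x : ℝ) : f u s (-x) = f u s x := by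
  have hinv : (1 + -x) / (1 - -x) = ((1 + x) / (1 - x))⁻¹ := by rw [inv_div]; ring_nf
  simp only [f, hinv, log_inv]
  ring_nf

lemma f_limit_nonpos_iff {u : ℝ} (hu : u < 1) :
    1 - log 2 + 1 / 2 * log (1 - u) ≤ 0 ↔ 1 - 4 / exp 1 ^ 2 ≤ u := by
  have hlog : log (4 / exp 1 ^ 2) = 2 * log 2 - 2 := by
    rw [log_div (by norm_num) (by positivity), show (4 : ℝ) = 2 ^ 2 by norm_num, log_pow, log_pow,
      log_exp]
    push_cast
    ring
  rw [sub_le_comm, ← log_le_log_iff (x := 1 - u) (by linarith) (by positivity), hlog]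
  constructor <;> intro h <;> linarith

lemma forall_f_pos_iff {u : ℝ} (hu0 : 0 ≤ u) (hu1 : u ≤ 1) :
    (∀ x ∈ Ioo 0 1, 0 < f u 1 x) ↔ u ≤ 1 / 3 := by
  refine ⟨fun hpos => ?_, fun hu _ hx => f_pos hu0 hu hx⟩
  by_contra! hu
  obtain ⟨x, hx, hfx⟩ := exists_f_neg hu hu1
  exact (hpos x hx).not_gt hfx

lemma forall_f_neg_iff {u : ℝ} (hu0 : 0 ≤ u) (hu1 : u ≤ 1) :
    (∀ x ∈ Ioo 0 1, f u 1 x < 0) ↔ 1 - 4 / exp 1 ^ 2 ≤ u := by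
  have hstar0 : 0 ≤ 1 - 4 / exp 1 ^ 2 := by
    have : 2 ≤ exp 1 := by linarith [add_one_le_exp (1 : ℝ)]
    rw [sub_nonneg, div_le_one (by positivity)]
    nlinarith
  have hstar1 : 1 - 4 / exp 1 ^ 2 < 1 := by
    have : 0 < 4 / exp 1 ^ 2 := by positivity
    linarith
  constructor
  · intro hneg
    rcases hu1.lt_or_eq with hu1 | rfl
    · exact (f_limit_nonpos_iff hu1).1 (f_limit_nonpos_of_forall_f_neg hu1 hneg)
    · exact hstar1.le
  · intro hu x hx
    exact (f_le_f_of_le hu hu1 ⟨by linarith [hx.1], hx.2⟩).trans_lt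
      (f_neg hstar0 hstar1 ((f_limit_nonpos_iff hstar1).2 le_rfl) hx)

lemma ratio_mem_Ioo {a b : ℝ} (ha : 0 < a) (hb : 0 < b) : (a - b) / (a + b) ∈ Ioo (-1) 1 := by
  constructor
  · rw [lt_div_iff₀ (by linarith)]; linarith
  · rw [div_lt_one (by linarith)]; linarith

lemma forall_ratio_iff {P : ℝ → Prop} (hP : ∀ x, P (-x) → P x) :
    (∀ a b : ℝ, 0 < a → 0 < b → a ≠ b → P ((a - b) / (a + b))) ↔ ∀ x ∈ Ioo (0 : ℝ) 1, P x := by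
  constructor
  · intro hall x hx
    have := hall (1 + x) (1 - x) (by linarith [hx.1]) (by linarith [hx.2])
      (by intro h; linarith [hx.1])
    rwa [show (1 + x - (1 - x)) / (1 + x + (1 - x)) = x by ring] at this
  · intro hall a b ha hb hab
    obtain ⟨hx1, hx2⟩ := ratio_mem_Ioo ha hb
    have hx0 : (a - b) / (a + b) ≠ 0 := div_ne_zero (sub_ne_zero.2 hab) (by linarith)
    rcases hx0.lt_or_gt with hneg | hpos
    · exact hP _ (hall _ ⟨neg_pos.2 hneg, by linarith⟩)
    · exact hall _ ⟨hpos, hx2⟩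

lemma I_pos {a b : ℝ} (ha : 0 < a) (hb : 0 < b) : 0 < I a b := by
  unfold I
  positivity

lemma log_I {a b : ℝ} (ha : 0 < a) (hb : 0 < b) :
    log (I a b) = (a * log a - b * log b) / (a - b) - 1 := by
  have hq : 0 < a ^ a / b ^ b := by positivity
  rw [I, log_mul (by positivity) (by positivity), log_rpow hq,
    log_div (x := a ^ a) (by positivity) (by positivity),
    log_rpow ha, log_rpow hb, one_div, log_inv, log_exp]
  ring

lemma G_mix_pos {t a b : ℝ} (ht : t ∈ Icc 0 1) (ha : 0 < a) (hb : 0 < b) :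
    0 < G (t * a + (1 - t) * b) (t * b + (1 - t) * a) := by
  have h1 : 0 < t * a + (1 - t) * b := by
    simpa using convex_Ioi (0 : ℝ) ha hb ht.1 (sub_nonneg.2 ht.2) (add_sub_cancel t 1)
  have h2 : 0 < t * b + (1 - t) * a := by
    simpa using convex_Ioi (0 : ℝ) hb ha ht.1 (sub_nonneg.2 ht.2) (add_sub_cancel t 1)
  exact sqrt_pos.2 (mul_pos h1 h2)

lemma log_G_sub_log_I {t a b : ℝ} (ht : t ∈ Icc 0 1) (ha : 0 < a) (hb : 0 < b) (hab : a ≠ b) :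
    log (G (t * a + (1 - t) * b) (t * b + (1 - t) * a)) - log (I a b)
      = f ((1 - 2 * t) ^ 2) 1 ((a - b) / (a + b)) := by
  set A := (a + b) / 2
  set x := (a - b) / (a + b)
  have hA : 0 < A := by positivity
  have hx : x ∈ Ioo (-1) 1 := ratio_mem_Ioo ha hb
  have hx0 : x ≠ 0 := div_ne_zero (sub_ne_zero.2 hab) (by linarith)
  have h1 : 0 < 1 + x := by linarith [hx.1]
  have h2 : 0 < 1 - x := by linarith [hx.2]
  have ha' : a = A * (1 + x) := by simp only [A, x]; field_simp; ring
  have hb' : b = A * (1 - x) := by simp only [A, x]; field_simp; ring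
  clear_value A x
  have hux := one_sub_mul_sq_pos (u := (1 - 2 * t) ^ 2) (by nlinarith [ht.1, ht.2]) hx
  have hprod : (t * a + (1 - t) * b) * (t * b + (1 - t) * a)
      = A ^ 2 * (1 - (1 - 2 * t) ^ 2 * x ^ 2) := by
    rw [ha', hb']; ring
  rw [G, hprod, log_sqrt (mul_pos (pow_pos hA 2) hux).le, log_I ha hb,
    log_mul (by positivity) hux.ne', log_pow]
  rw [ha', hb', log_mul hA.ne' h1.ne', log_mul hA.ne' h2.ne',
    show A * (1 + x) - A * (1 - x) = 2 * A * x by ring]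
  simp only [f, log_div h1.ne' h2.ne', show 1 - x ^ 2 = (1 + x) * (1 - x) by ring,
    log_mul h1.ne' h2.ne']
  field_simp
  ring

lemma G_lt_I_iff {t a b : ℝ} (ht : t ∈ Icc 0 1) (ha : 0 < a) (hb : 0 < b) (hab : a ≠ b) :
    G (t * a + (1 - t) * b) (t * b + (1 - t) * a) < I a b ↔
      f ((1 - 2 * t) ^ 2) 1 ((a - b) / (a + b)) < 0 := by
  rw [← log_lt_log_iff (G_mix_pos ht ha hb) (I_pos ha hb), ← sub_neg,
    log_G_sub_log_I ht ha hb hab]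

lemma I_lt_G_iff {t a b : ℝ} (ht : t ∈ Icc 0 1) (ha : 0 < a) (hb : 0 < b) (hab : a ≠ b) :
    I a b < G (t * a + (1 - t) * b) (t * b + (1 - t) * a) ↔
      0 < f ((1 - 2 * t) ^ 2) 1 ((a - b) / (a + b)) := by
  rw [← log_lt_log_iff (I_pos ha hb) (G_mix_pos ht ha hb), ← sub_pos,
    log_G_sub_log_I ht ha hb hab]

lemma le_one_sub_sqrt_div_two_iff {t v : ℝ} (ht : t ≤ 1 / 2) :
    t ≤ (1 - √v) / 2 ↔ v ≤ (1 - 2 * t) ^ 2 := by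
  rw [← sqrt_le_left (by linarith)]
  constructor <;> intro h <;> linarith

lemma one_sub_sqrt_div_two_le_iff {t v : ℝ} (ht : t ≤ 1 / 2) (hv : 0 ≤ v) :
    (1 - √v) / 2 ≤ t ↔ (1 - 2 * t) ^ 2 ≤ v := by
  rw [← le_sqrt (by linarith) hv]
  constructor <;> intro h <;> linarith

theorem stmt_10 (p q : ℝ) (hp : p ∈ Set.Icc (0:ℝ) (1/2)) (hq : q ∈ Set.Icc (0:ℝ) (1/2)) :
    (∀ a b : ℝ, 0 < a → 0 < b → a ≠ b →
        G (p*a + (1-p)*b) (p*b + (1-p)*a) < I a b ∧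
          I a b < G (q*a + (1-q)*b) (q*b + (1-q)*a)) ↔
      p ≤ (1 - Real.sqrt (1 - 4 / Real.exp 1 ^ 2)) / 2 ∧ (3 - Real.sqrt 3) / 6 ≤ q := by
  have hp' : p ∈ Icc (0 : ℝ) 1 := ⟨hp.1, by linarith [hp.2]⟩
  have hq' : q ∈ Icc (0 : ℝ) 1 := ⟨hq.1, by linarith [hq.2]⟩
  have hup : (1 - 2 * p) ^ 2 ≤ 1 := by nlinarith [hp.1, hp.2]
  have huq : (1 - 2 * q) ^ 2 ≤ 1 := by nlinarith [hq.1, hq.2]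
  have hsqrt3 : (3 - √3) / 6 = (1 - √(1 / 3)) / 2 := by
    rw [sqrt_div' _ zero_le_three, sqrt_one]
    field_simp
    linear_combination (-2) * mul_self_sqrt zero_le_three
  calc _ ↔ ∀ a b : ℝ, 0 < a → 0 < b → a ≠ b →
        f ((1 - 2 * p) ^ 2) 1 ((a - b) / (a + b)) < 0 ∧
          0 < f ((1 - 2 * q) ^ 2) 1 ((a - b) / (a + b)) :=
        forall₂_congr fun a b => imp_congr_right fun ha => imp_congr_right fun hb =>
          imp_congr_right fun hab => and_congr (G_lt_I_iff hp' ha hb hab) (I_lt_G_iff hq' ha hb hab)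
    _ ↔ ∀ x ∈ Ioo (0 : ℝ) 1, f ((1 - 2 * p) ^ 2) 1 x < 0 ∧ 0 < f ((1 - 2 * q) ^ 2) 1 x :=
        forall_ratio_iff (P := fun x => f ((1 - 2 * p) ^ 2) 1 x < 0 ∧ 0 < f ((1 - 2 * q) ^ 2) 1 x)
          fun x => by simp only [f_even, imp_self]
    _ ↔ _ := by
      rw [forall₂_and, forall_f_neg_iff (sq_nonneg _) hup, forall_f_pos_iff (sq_nonneg _) huq,
        le_one_sub_sqrt_div_two_iff hp.2, hsqrt3, one_sub_sqrt_div_two_le_iff hq.2 (by norm_num)]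
end

section
/- Let s ≥ 1 and u ∈ [0,1]. Then f_{u,s}(x) tends to 0 as x tends to 0 from the right; moreover, if u < 1, then f_{u,s}(x) tends to ln(e·(1-u)^(s/2)/2) as x tends to 1 from the left. -/
/-!
At `0` the only singular term of `f u s` is `log ((1 + x) / (1 - x)) / (2 x)`, a difference
quotient of a function with derivative `2` at `0`, so it tends to `1`. At `1`, splitting
`log ((1 + x) / (1 - x))` and `log (1 - x²)` into logarithms of `1 ± x` makes the two
`log (1 - x)` terms combine to `(1 - x) log (1 - x) / (2 x)`, which is continuous at `1`
because `t ↦ t log t` is continuous at `0`.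
-/

open Real Filter Set Topology

lemma hasDerivAt_log_one_add_div_one_sub_zero :
    HasDerivAt (fun x : ℝ => log ((1 + x) / (1 - x))) 2 0 := by
  have h := (((hasDerivAt_id (0 : ℝ)).const_add 1).div
    ((hasDerivAt_id (0 : ℝ)).const_sub 1) (by norm_num)).log (by norm_num)
  convert h using 1 <;> norm_num

lemma tendsto_log_one_add_div_one_sub_div_self :
    Tendsto (fun x : ℝ => log ((1 + x) / (1 - x)) / x) (𝓝[≠] 0) (𝓝 2) := by
  refine (hasDerivAt_iff_tendsto_slope.1 hasDerivAt_log_one_add_div_one_sub_zero).congr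
    fun x => ?_
  simp [slope_def_field]

theorem tendsto_f_nhdsNE_zero (u s : ℝ) : Tendsto (f u s) (𝓝[≠] 0) (𝓝 0) := by
  have hlogs : ContinuousAt
      (fun x : ℝ => (1 / 2) * log (1 - x ^ 2) - (s / 2) * log (1 - u * x ^ 2)) 0 := by
    fun_prop (disch := norm_num)
  have hlim := (tendsto_const_nhds (x := (1 : ℝ))).sub
    ((tendsto_log_one_add_div_one_sub_div_self.const_mul (1 / 2)).add
      (hlogs.tendsto.mono_left nhdsWithin_le_nhds))
  norm_num at hlim
  refine hlim.congr fun x => ?_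
  simp only [f]
  ring

lemma f_eq_of_ne (u s : ℝ) {x : ℝ} (hx : x ≠ 0) (hxp : 1 + x ≠ 0) (hxm : 1 - x ≠ 0) :
    f u s x = 1 - (1 / (2 * x) + 1 / 2) * log (1 + x) + (1 - x) * log (1 - x) / (2 * x)
      + (s / 2) * log (1 - u * x ^ 2) := by
  rw [f, log_div hxp hxm, show (1 : ℝ) - x ^ 2 = (1 + x) * (1 - x) by ring,
    log_mul hxp hxm]
  field_simp
  ring

theorem tendsto_f_nhdsNE_one (s : ℝ) {u : ℝ} (hu : u < 1) :
    Tendsto (f u s) (𝓝[≠] 1) (𝓝 (1 - log 2 + (s / 2) * log (1 - u))) := by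
  have hcont : ContinuousAt (fun x : ℝ => 1 - (1 / (2 * x) + 1 / 2) * log (1 + x)
      + (1 - x) * log (1 - x) / (2 * x) + (s / 2) * log (1 - u * x ^ 2)) 1 := by
    have hu_ne : 1 - u * 1 ^ 2 ≠ 0 := by linarith
    fun_prop (disch := norm_num [hu_ne])
  have hlim := hcont.tendsto.mono_left (nhdsWithin_le_nhds (s := {1}ᶜ))
  norm_num at hlim
  refine hlim.congr' ?_
  filter_upwards [self_mem_nhdsWithin,
    nhdsWithin_le_nhds (eventually_ne_nhds (one_ne_zero (α := ℝ))),
    nhdsWithin_le_nhds (eventually_ne_nhds (show (1 : ℝ) ≠ -1 by norm_num))]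
    with x hx1 hx0 hxm
  rw [f_eq_of_ne u s hx0 (by contrapose! hxm; linarith) (sub_ne_zero.2 (Ne.symm hx1))]
  ring

lemma log_exp_one_mul_rpow_div_two (s : ℝ) {u : ℝ} (hu : u < 1) :
    log (exp 1 * (1 - u) ^ (s / 2) / 2) = 1 - log 2 + (s / 2) * log (1 - u) := by
  have h1u : 0 < 1 - u := by linarith
  rw [log_div (by positivity) two_ne_zero, log_mul (exp_ne_zero 1) (by positivity), log_exp,
    log_rpow h1u]
  ring

theorem stmt_16_general (s u : ℝ) :
    Filter.Tendsto (f u s) (nhdsWithin 0 (Set.Ioi 0)) (nhds 0) ∧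
      (u < 1 →
        Filter.Tendsto (f u s) (nhdsWithin 1 (Set.Iio 1))
          (nhds (Real.log (Real.exp 1 * (1 - u) ^ (s/2) / 2)))) := by
  refine ⟨(tendsto_f_nhdsNE_zero u s).mono_left
    (nhdsWithin_mono _ fun x hx => ne_of_gt hx), fun hu => ?_⟩
  rw [log_exp_one_mul_rpow_div_two s hu]
  exact (tendsto_f_nhdsNE_one s hu).mono_left (nhdsWithin_mono _ fun x hx => ne_of_lt hx)

theorem stmt_16 (s u : ℝ) (hs : 1 ≤ s) (hu : u ∈ Set.Icc (0:ℝ) 1) :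
    Filter.Tendsto (f u s) (nhdsWithin 0 (Set.Ioi 0)) (nhds 0) ∧
      (u < 1 →
        Filter.Tendsto (f u s) (nhdsWithin 1 (Set.Iio 1))
          (nhds (Real.log (Real.exp 1 * (1 - u) ^ (s/2) / 2)))) :=
  stmt_16_general s u
end
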